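/- arXiv:0710.3001 — 2 statements merged into one kernel-verified Lean document; each statement's English description precedes it below -/
import Mathlib

section
/- Fix a real number q > 1 and denote by (α_i) the quasi-greedy expansion of 1 in base q with unbounded digits. The map x ↦ (b_i), where (b_i) denotes the greedy expansion of x, is a strictly increasing one-to-one correspondence between the interval [0, ∞) and the set of all sequences (b_i) of nonnegative integers satisfying b_{n+1}b_{n+2}... < α_1α_2... (strict lexicographic inequality) for all n ≥ 1. -/
/-- Strict lexicographic order on digit sequences (indexed from 0). -/
def LexLt (a b : ℕ → ℕ) : Prop :=
  ∃ n, (∀ k, k < n → a k = b k) ∧ a n < b n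

/-- Non-strict lexicographic order on digit sequences. -/
def LexLe (a b : ℕ → ℕ) : Prop :=
  LexLt a b ∨ a = b

/-- The next quasi-greedy digit with unbounded digits: the largest nonnegative integer `m`
with `s + m / q ^ (n+1) < x`, where `s` is the value of the previously chosen digits. -/
noncomputable def qgDigitU (q x s : ℝ) (n : ℕ) : ℕ :=
  sSup {m : ℕ | s + (m : ℝ) / q ^ (n + 1) < x}

/-- Partial sums of the quasi-greedy expansion of `x` in base `q` with unbounded digits. -/
noncomputable def qgSumU (q x : ℝ) : ℕ → ℝ
  | 0 => 0
  | n + 1 => qgSumU q x n + (qgDigitU q x (qgSumU q x n) n : ℝ) / q ^ (n + 1)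

/-- `quasiGreedyU q x n` is the `(n+1)`-st digit (indexing from 0) of the quasi-greedy
expansion of `x` in base `q` with unbounded digits: recursively, it is the largest
nonnegative integer `a_n` with `a_1/q + ⋯ + a_n/q^n < x`. -/
noncomputable def quasiGreedyU (q x : ℝ) (n : ℕ) : ℕ :=
  qgDigitU q x (qgSumU q x n) n

/-- The next greedy digit with unbounded digits: the largest nonnegative integer `m`
with `s + m / q ^ (n+1) ≤ x`, where `s` is the value of the previously chosen digits. -/
noncomputable def gDigitU (q x s : ℝ) (n : ℕ) : ℕ :=
  sSup {m : ℕ | s + (m : ℝ) / q ^ (n + 1) ≤ x}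

/-- Partial sums of the greedy expansion of `x` in base `q` with unbounded digits. -/
noncomputable def gSumU (q x : ℝ) : ℕ → ℝ
  | 0 => 0
  | n + 1 => gSumU q x n + (gDigitU q x (gSumU q x n) n : ℝ) / q ^ (n + 1)

/-- `greedyU q x n` is the `(n+1)`-st digit (indexing from 0) of the greedy expansion
of `x` in base `q` with unbounded digits: recursively, it is the largest nonnegative
integer `b_n` with `b_1/q + ⋯ + b_n/q^n ≤ x`. -/
noncomputable def greedyU (q x : ℝ) (n : ℕ) : ℕ :=
  gDigitU q x (gSumU q x n) n

/-!
Write `P_n(c) = ∑_{i<n} c_i / q^(i+1)`. The greedy digits of `x ≥ 0` are characterized by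
`P_{n+1} ≤ x < P_{n+1} + q^-(n+1)` for all `n`; the quasi-greedy digits of `x > 0` satisfy the same
with `<` and `≤` exchanged. If two sequences first differ at index `n`, the larger prefix value
exceeds the smaller by at least `q^-(n+1)`. This gives the strict monotonicity, and shows that
a sequence whose value is `< 1` (such as any tail of a greedy expansion) lies below `α`, the
quasi-greedy expansion of `1`. Conversely, if all tails of `b` lie below `α`, an induction on the
length of prefixes shows that these tails have value `< 1`, which are exactly the inequalities
characterizing `b` as the greedy expansion of its value.
-/

open Finset Filter Topology

noncomputable def prefixValue (q : ℝ) (a : ℕ → ℕ) (n : ℕ) : ℝ :=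
  ∑ i ∈ range n, (a i : ℝ) / q ^ (i + 1)

def IsExpansion (q : ℝ) (c : ℕ → ℕ) (x : ℝ) : Prop :=
  HasSum (fun i => (c i : ℝ) / q ^ (i + 1)) x

theorem lexLt_or_lexLt_of_ne {a b : ℕ → ℕ} (h : a ≠ b) : LexLt a b ∨ LexLt b a := by
  classical
  have hex : ∃ n, a n ≠ b n := Function.ne_iff.mp h
  have hbelow : ∀ k < Nat.find hex, a k = b k := fun k hk => not_not.mp (Nat.find_min hex hk)
  rcases (Nat.find_spec hex).lt_or_gt with hlt | hgt
  · exact Or.inl ⟨_, hbelow, hlt⟩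
  · exact Or.inr ⟨_, fun k hk => (hbelow k hk).symm, hgt⟩

section PrefixValue

variable {q : ℝ} {a b : ℕ → ℕ}

theorem prefixValue_zero : prefixValue q a 0 = 0 := sum_range_zero _

theorem prefixValue_succ (n : ℕ) :
    prefixValue q a (n + 1) = prefixValue q a n + (a n : ℝ) / q ^ (n + 1) :=
  sum_range_succ _ _

theorem prefixValue_mono (hq : 0 < q) : Monotone (prefixValue q a) := by
  refine monotone_nat_of_le_succ fun n => ?_
  rw [prefixValue_succ]
  have : (0 : ℝ) ≤ (a n : ℝ) / q ^ (n + 1) := by positivity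
  linarith

theorem prefixValue_congr {n : ℕ} (h : ∀ k < n, a k = b k) :
    prefixValue q a n = prefixValue q b n :=
  sum_congr rfl fun k hk => by rw [h k (mem_range.mp hk)]

theorem prefixValue_add_le_of_lt {n : ℕ} (hq : 0 < q) (hbelow : ∀ k < n, a k = b k)
    (hn : a n < b n) :
    prefixValue q a (n + 1) + 1 / q ^ (n + 1) ≤ prefixValue q b (n + 1) := by
  have hdigit : ((a n : ℝ) + 1) / q ^ (n + 1) ≤ (b n : ℝ) / q ^ (n + 1) := by
    gcongr; exact_mod_cast hn
  rw [prefixValue_succ, prefixValue_succ, prefixValue_congr hbelow, add_div] at *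
  linarith

theorem prefixValue_add (a : ℕ → ℕ) (m k : ℕ) :
    prefixValue q a (m + k) = prefixValue q a m + prefixValue q (fun i => a (m + i)) k / q ^ m := by
  rw [prefixValue, prefixValue, prefixValue, sum_range_add, sum_div]
  congr 1
  refine sum_congr rfl fun i _ => ?_
  rw [div_div, ← pow_add]
  congr 2
  omega

end PrefixValue

section Digits

variable {q x s : ℝ} {n : ℕ}

theorem add_div_le_iff_le_sub_mul {m Q : ℝ} (hQ : 0 < Q) :
    s + m / Q ≤ x ↔ m ≤ (x - s) * Q := by
  rw [← le_sub_iff_add_le', div_le_iff₀ hQ]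

theorem add_div_lt_iff_lt_sub_mul {m Q : ℝ} (hQ : 0 < Q) :
    s + m / Q < x ↔ m < (x - s) * Q := by
  rw [← lt_sub_iff_add_lt', div_lt_iff₀ hQ]

theorem gDigitU_eq_floor (hq : 0 < q) (hs : s ≤ x) :
    gDigitU q x s n = ⌊(x - s) * q ^ (n + 1)⌋₊ := by
  have hQ : 0 < q ^ (n + 1) := pow_pos hq _
  have hset :
      {m : ℕ | s + (m : ℝ) / q ^ (n + 1) ≤ x} = Set.Iic ⌊(x - s) * q ^ (n + 1)⌋₊ := by
    ext m
    rw [Set.mem_Iic, Nat.le_floor_iff (by nlinarith), ← add_div_le_iff_le_sub_mul hQ]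
    rfl
  rw [gDigitU, hset, csSup_Iic]

theorem gDigitU_spec (hq : 0 < q) (hs : s ≤ x) :
    s + (gDigitU q x s n : ℝ) / q ^ (n + 1) ≤ x ∧
      x < s + ((gDigitU q x s n : ℝ) + 1) / q ^ (n + 1) := by
  have hQ : 0 < q ^ (n + 1) := pow_pos hq _
  have hy : 0 ≤ (x - s) * q ^ (n + 1) := by nlinarith
  rw [add_div_le_iff_le_sub_mul hQ, ← not_le, add_div_le_iff_le_sub_mul hQ, not_le,
    gDigitU_eq_floor hq hs]
  exact ⟨Nat.floor_le hy, Nat.lt_floor_add_one _⟩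

theorem gDigitU_eq_of_le_of_lt (hq : 0 < q) {d : ℕ} (hle : s + (d : ℝ) / q ^ (n + 1) ≤ x)
    (hlt : x < s + ((d : ℝ) + 1) / q ^ (n + 1)) : gDigitU q x s n = d := by
  have hQ : 0 < q ^ (n + 1) := pow_pos hq _
  rw [add_div_le_iff_le_sub_mul hQ] at hle
  rw [← not_le, add_div_le_iff_le_sub_mul hQ, not_le] at hlt
  rw [gDigitU_eq_floor hq (by nlinarith), Nat.floor_eq_iff ((Nat.cast_nonneg d).trans hle)]
  exact ⟨hle, hlt⟩

theorem qgDigitU_spec (hq : 0 < q) (hs : s < x) :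
    s + (qgDigitU q x s n : ℝ) / q ^ (n + 1) < x ∧
      x ≤ s + ((qgDigitU q x s n : ℝ) + 1) / q ^ (n + 1) := by
  have hQ : 0 < q ^ (n + 1) := pow_pos hq _
  have hy : 0 < (x - s) * q ^ (n + 1) := by nlinarith
  have hceil : 0 < ⌈(x - s) * q ^ (n + 1)⌉₊ := Nat.ceil_pos.mpr hy
  have hset :
      {m : ℕ | s + (m : ℝ) / q ^ (n + 1) < x} = Set.Iic (⌈(x - s) * q ^ (n + 1)⌉₊ - 1) := by
    ext m
    rw [Set.mem_Iic, Nat.le_sub_one_iff_lt hceil, Nat.lt_ceil, ← add_div_lt_iff_lt_sub_mul hQ]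
    rfl
  have hdigit : (qgDigitU q x s n : ℝ) = ⌈(x - s) * q ^ (n + 1)⌉₊ - 1 := by
    rw [qgDigitU, hset, csSup_Iic, Nat.cast_sub hceil, Nat.cast_one]
  rw [add_div_lt_iff_lt_sub_mul hQ, ← not_lt, add_div_lt_iff_lt_sub_mul hQ, not_lt, hdigit,
    sub_add_cancel]
  exact ⟨by linarith [Nat.ceil_lt_add_one hy.le], Nat.le_ceil _⟩

end Digits

section Expansions

variable {q x : ℝ}

theorem gSumU_eq_prefixValue (q x : ℝ) (n : ℕ) :
    gSumU q x n = prefixValue q (greedyU q x) n := by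
  induction n with
  | zero => rw [prefixValue_zero]; rfl
  | succ n ih => rw [prefixValue_succ, ← ih]; rfl

theorem qgSumU_eq_prefixValue (q x : ℝ) (n : ℕ) :
    qgSumU q x n = prefixValue q (quasiGreedyU q x) n := by
  induction n with
  | zero => rw [prefixValue_zero]; rfl
  | succ n ih => rw [prefixValue_succ, ← ih]; rfl

theorem prefixValue_greedyU_le (hq : 0 < q) (hx : 0 ≤ x) (n : ℕ) :
    prefixValue q (greedyU q x) n ≤ x := by
  rw [← gSumU_eq_prefixValue]
  induction n with
  | zero => exact hx
  | succ n ih => exact (gDigitU_spec hq ih).1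

theorem lt_prefixValue_greedyU_add (hq : 0 < q) (hx : 0 ≤ x) (n : ℕ) :
    x < prefixValue q (greedyU q x) (n + 1) + 1 / q ^ (n + 1) := by
  have h := (gDigitU_spec (n := n) hq
    (gSumU_eq_prefixValue q x n ▸ prefixValue_greedyU_le hq hx n)).2
  rwa [prefixValue_succ, ← gSumU_eq_prefixValue, add_assoc, ← add_div]

theorem prefixValue_quasiGreedyU_lt (hq : 0 < q) (hx : 0 < x) (n : ℕ) :
    prefixValue q (quasiGreedyU q x) n < x := by
  rw [← qgSumU_eq_prefixValue]
  induction n with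
  | zero => exact hx
  | succ n ih => exact (qgDigitU_spec hq ih).1

theorem le_prefixValue_quasiGreedyU_add (hq : 0 < q) (hx : 0 < x) (n : ℕ) :
    x ≤ prefixValue q (quasiGreedyU q x) (n + 1) + 1 / q ^ (n + 1) := by
  have h := (qgDigitU_spec (n := n) hq
    (qgSumU_eq_prefixValue q x n ▸ prefixValue_quasiGreedyU_lt hq hx n)).2
  rwa [prefixValue_succ, ← qgSumU_eq_prefixValue, add_assoc, ← add_div]

theorem isExpansion_of_prefixValue_bounds (hq : 1 < q) {a : ℕ → ℕ}
    (hle : ∀ n, prefixValue q a n ≤ x)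
    (hge : ∀ n, x ≤ prefixValue q a (n + 1) + 1 / q ^ (n + 1)) :
    IsExpansion q a x := by
  have hq0 : 0 < q := zero_lt_one.trans hq
  rw [IsExpansion, hasSum_iff_tendsto_nat_of_nonneg (fun i => by positivity)]
  refine (tendsto_add_atTop_iff_nat 1).mp ?_
  have hpow : Tendsto (fun n : ℕ => x - (1 / q) ^ (n + 1)) atTop (𝓝 x) := by
    simpa using tendsto_const_nhds.sub ((tendsto_pow_atTop_nhds_zero_of_lt_one (by positivity)
      ((div_lt_one hq0).mpr hq)).comp (tendsto_add_atTop_nat 1))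
  refine tendsto_of_tendsto_of_tendsto_of_le_of_le hpow tendsto_const_nhds (fun n => ?_)
    (fun n => hle _)
  have := hge n
  rw [one_div_pow]
  change x - _ ≤ prefixValue q a (n + 1)
  linarith

theorem isExpansion_greedyU (hq : 1 < q) (hx : 0 ≤ x) : IsExpansion q (greedyU q x) x :=
  isExpansion_of_prefixValue_bounds hq (prefixValue_greedyU_le (zero_lt_one.trans hq) hx)
    fun n => (lt_prefixValue_greedyU_add (zero_lt_one.trans hq) hx n).le

theorem isExpansion_quasiGreedyU (hq : 1 < q) (hx : 0 < x) :
    IsExpansion q (quasiGreedyU q x) x :=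
  isExpansion_of_prefixValue_bounds hq
    (fun n => (prefixValue_quasiGreedyU_lt (zero_lt_one.trans hq) hx n).le)
    (le_prefixValue_quasiGreedyU_add (zero_lt_one.trans hq) hx)

end Expansions

namespace IsExpansion

variable {q x y : ℝ} {c : ℕ → ℕ}

theorem unique (hx : IsExpansion q c x) (hy : IsExpansion q c y) : x = y :=
  HasSum.unique hx hy

theorem nonneg (hq : 0 < q) (hx : IsExpansion q c x) : 0 ≤ x :=
  HasSum.nonneg (fun i => by positivity) hx

theorem prefixValue_le (hq : 0 < q) (hx : IsExpansion q c x) (n : ℕ) : prefixValue q c n ≤ x :=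
  sum_le_hasSum _ (fun i _ => by positivity) hx

theorem shift_iff (hq : 0 < q) (m : ℕ) :
    IsExpansion q (fun i => c (m + i)) y ↔ IsExpansion q c (prefixValue q c m + y / q ^ m) := by
  have hQ : q ^ m ≠ 0 := (pow_pos hq m).ne'
  rw [IsExpansion, IsExpansion, ← hasSum_div_const_iff hQ,
    ← hasSum_nat_add_iff' m (f := fun i => (c i : ℝ) / q ^ (i + 1)), prefixValue,
    add_sub_cancel_left]
  refine iff_of_eq (congrArg (HasSum · _) (funext fun i => ?_))
  rw [add_comm i m, div_div, ← pow_add, add_right_comm, add_comm i m]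

theorem shift (hq : 0 < q) (hx : IsExpansion q c x) (m : ℕ) :
    IsExpansion q (fun i => c (m + i)) (q ^ m * (x - prefixValue q c m)) := by
  rw [shift_iff hq, mul_div_cancel_left₀ _ (pow_pos hq m).ne', add_sub_cancel]
  exact hx

end IsExpansion

section Order

variable {q x x' y : ℝ} {c : ℕ → ℕ}

theorem not_lexLt_greedyU (hq : 0 < q) (hx : 0 ≤ x) (hc : IsExpansion q c y) (hyx : y ≤ x) :
    ¬ LexLt (greedyU q x) c := by
  rintro ⟨n, hbelow, hn⟩
  have := prefixValue_add_le_of_lt hq hbelow hn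
  linarith [lt_prefixValue_greedyU_add hq hx n, hc.prefixValue_le hq (n + 1)]

theorem not_lexLt_quasiGreedyU (hq : 0 < q) (hx : 0 < x) (hc : IsExpansion q c y) (hyx : y < x) :
    ¬ LexLt (quasiGreedyU q x) c := by
  rintro ⟨n, hbelow, hn⟩
  have := prefixValue_add_le_of_lt hq hbelow hn
  linarith [le_prefixValue_quasiGreedyU_add hq hx n, hc.prefixValue_le hq (n + 1)]

theorem lexLt_greedyU_of_lt (hq : 1 < q) (hx : 0 ≤ x) (hxx' : x < x') :
    LexLt (greedyU q x) (greedyU q x') := by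
  have hq0 : 0 < q := zero_lt_one.trans hq
  have hexp := isExpansion_greedyU hq hx
  have hne : greedyU q x ≠ greedyU q x' := fun h =>
    hxx'.ne (hexp.unique (h ▸ isExpansion_greedyU hq (hx.trans hxx'.le)))
  exact (lexLt_or_lexLt_of_ne hne).resolve_right
    (not_lexLt_greedyU hq0 (hx.trans hxx'.le) hexp hxx'.le)

theorem lexLt_quasiGreedyU_of_isExpansion (hq : 1 < q) (hc : IsExpansion q c y) (hyx : y < x) :
    LexLt c (quasiGreedyU q x) := by
  have hq0 : 0 < q := zero_lt_one.trans hq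
  have hx : 0 < x := (hc.nonneg hq0).trans_lt hyx
  have hne : c ≠ quasiGreedyU q x := fun h =>
    hyx.ne (hc.unique (h ▸ isExpansion_quasiGreedyU hq hx))
  exact (lexLt_or_lexLt_of_ne hne).resolve_right (not_lexLt_quasiGreedyU hq0 hx hc hyx)

theorem greedyU_tail_lexLt_quasiGreedyU_one (hq : 1 < q) (hx : 0 ≤ x) (n : ℕ) :
    LexLt (fun i => greedyU q x (n + 1 + i)) (quasiGreedyU q 1) := by
  have hq0 : 0 < q := zero_lt_one.trans hq
  have hQ : 0 < q ^ (n + 1) := pow_pos hq0 _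
  refine lexLt_quasiGreedyU_of_isExpansion hq ((isExpansion_greedyU hq hx).shift hq0 (n + 1)) ?_
  have := lt_prefixValue_greedyU_add hq0 hx n
  calc q ^ (n + 1) * (x - prefixValue q (greedyU q x) (n + 1))
      < q ^ (n + 1) * (1 / q ^ (n + 1)) := by gcongr; linarith
    _ = 1 := mul_one_div_cancel hQ.ne'

end Order

section Surjectivity

variable {q x : ℝ}

theorem greedyU_eq_of_prefixValue_bounds (hq : 0 < q) {b : ℕ → ℕ}
    (hle : ∀ n, prefixValue q b n ≤ x)
    (hlt : ∀ n, x < prefixValue q b (n + 1) + 1 / q ^ (n + 1)) : greedyU q x = b := by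
  funext n
  induction n using Nat.strong_induction_on with
  | _ n ih =>
  rw [greedyU, gSumU_eq_prefixValue, prefixValue_congr ih]
  refine gDigitU_eq_of_le_of_lt hq ?_ ?_
  · exact prefixValue_succ (q := q) (a := b) n ▸ hle (n + 1)
  · rw [add_div, ← add_assoc, ← prefixValue_succ]
    exact hlt n

/-- Cutting `c` after its first deficit `K` against `α` loses at least `1 / q^(K+1)`, which pays
for the rest of `c`: that tail again has all its shifts below `α`, so by induction its value is
below `1`. -/
theorem prefixValue_le_of_forall_shift_lexLt (hq : 0 < q) {α : ℕ → ℕ}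
    (hα : ∀ n, prefixValue q α n < 1) (N : ℕ) :
    ∀ {c : ℕ → ℕ}, (∀ m, LexLt (fun i => c (m + i)) α) → ∀ {K : ℕ}, (∀ k < K, c k = α k) →
      c K < α K → prefixValue q c N ≤ prefixValue q α (K + 1) := by
  induction N using Nat.strong_induction_on with
  | _ N ih =>
  intro c hc K hbelow hK
  rcases le_or_gt N K with hNK | hKN
  · rw [prefixValue_congr fun k hk => hbelow k (hk.trans_le hNK)]
    exact prefixValue_mono hq (by omega)
  obtain ⟨k, rfl⟩ : ∃ k, N = K + 1 + k := ⟨N - (K + 1), by omega⟩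
  obtain ⟨K', hbelow', hK'⟩ := hc (K + 1)
  have hshift : ∀ m, LexLt (fun i => c (K + 1 + (m + i))) α := fun m => by
    simpa only [add_assoc] using hc (K + 1 + m)
  have htail : prefixValue q (fun i => c (K + 1 + i)) k ≤ 1 :=
    (ih k (by omega) hshift hbelow' hK').trans (hα _).le
  have hQ : 0 < q ^ (K + 1) := pow_pos hq _
  have hhead := prefixValue_add_le_of_lt hq hbelow hK
  rw [prefixValue_add]
  have : prefixValue q (fun i => c (K + 1 + i)) k / q ^ (K + 1) ≤ 1 / q ^ (K + 1) := by gcongr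
  linarith

theorem exists_isExpansion_lt_one_of_forall_shift_lexLt (hq : 0 < q) {α : ℕ → ℕ}
    (hα : ∀ n, prefixValue q α n < 1) {c : ℕ → ℕ} (hc : ∀ m, LexLt (fun i => c (m + i)) α) :
    ∃ y < 1, IsExpansion q c y := by
  obtain ⟨K, hbelow, hK⟩ := hc 0
  simp only [zero_add] at hbelow hK
  have hbound := fun N => prefixValue_le_of_forall_shift_lexLt hq hα N hc hbelow hK
  have hsum : Summable fun i => (c i : ℝ) / q ^ (i + 1) :=
    summable_of_sum_range_le (fun i => by positivity) hbound
  exact ⟨_, (hsum.tsum_le_of_sum_range_le hbound).trans_lt (hα _), hsum.hasSum⟩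

theorem exists_greedyU_eq (hq : 1 < q) {b : ℕ → ℕ}
    (hb : ∀ n, LexLt (fun i => b (n + 1 + i)) (quasiGreedyU q 1)) :
    ∃ x, 0 ≤ x ∧ greedyU q x = b := by
  have hq0 : 0 < q := zero_lt_one.trans hq
  have htail : ∀ n, ∃ y < 1, IsExpansion q (fun i => b (n + 1 + i)) y := fun n =>
    exists_isExpansion_lt_one_of_forall_shift_lexLt hq0 (prefixValue_quasiGreedyU_lt hq0 one_pos)
      fun m => by convert hb (n + m) using 3; omega
  obtain ⟨y₀, -, hy₀⟩ := htail 0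
  have hx := (IsExpansion.shift_iff hq0 (0 + 1)).mp hy₀
  refine ⟨_, hx.nonneg hq0,
    greedyU_eq_of_prefixValue_bounds hq0 (hx.prefixValue_le hq0) fun n => ?_⟩
  obtain ⟨y, hy1, hy⟩ := htail n
  rw [hx.unique ((IsExpansion.shift_iff hq0 (n + 1)).mp hy)]
  gcongr

end Surjectivity

/-- Theorem 3.6 (b): for fixed `q > 1`, the map `x ↦ (b_i)`, the greedy expansion of `x`
with unbounded digits, is a strictly increasing one-to-one correspondence between `[0, ∞)`
and the set of all sequences of nonnegative integers satisfying `b_{n+1}b_{n+2}… < α_1α_2…`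
for all `n ≥ 1`, where `(α_i)` is the quasi-greedy expansion of `1`. -/
theorem greedyU_bijection (q : ℝ) (hq : 1 < q) :
    (∀ x x' : ℝ, 0 ≤ x → x < x' → LexLt (greedyU q x) (greedyU q x')) ∧
    Set.BijOn (fun x : ℝ => greedyU q x) (Set.Ici 0)
      {b : ℕ → ℕ | ∀ n, LexLt (fun i => b (n + 1 + i)) (quasiGreedyU q 1)} := by
  refine ⟨fun x x' hx hxx' => lexLt_greedyU_of_lt hq hx hxx',
    fun x hx => greedyU_tail_lexLt_quasiGreedyU_one hq hx, fun x hx x' hx' h => ?_,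
    fun b hb => exists_greedyU_eq hq hb⟩
  have h : greedyU q x = greedyU q x' := h
  exact (isExpansion_greedyU hq hx).unique (h ▸ isExpansion_greedyU hq hx')
end

section
/- Let q > 1 and x > 0, with unbounded digits allowed. Denote by (a_i) and (b_i) the quasi-greedy and greedy expansions of x in base q, and by (α_i) the quasi-greedy expansion of 1. If (b_i) has a last nonzero element b_m (i.e., b_m ≥ 1 and b_i = 0 for all i > m), then (a_i) = b_1 ... b_{m−1} (b_m − 1) α_1 α_2 ..., i.e., a_i = b_i for i < m, a_m = b_m − 1, and a_{m+i} = α_i for all i ≥ 1. Otherwise (if (b_i) has infinitely many nonzero terms) we have (a_i) = (b_i). -/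
open Filter Topology

theorem Nat.le_sSup_setOf_iff {P : ℕ → Prop} (hP : ∀ ⦃k m⦄, k ≤ m → P m → P k)
    (h0 : P 0) (hbdd : BddAbove {m | P m}) {k : ℕ} : k ≤ sSup {m | P m} ↔ P k :=
  ⟨fun hk => hP hk (Nat.sSup_mem ⟨0, h0⟩ hbdd), fun hk => le_csSup hbdd hk⟩

section Digits

variable {q x s : ℝ} {n k : ℕ}

theorem bddAbove_setOf_add_div_le {c : ℝ} (hc : 0 < c) : BddAbove {m : ℕ | s + m / c ≤ x} :=
  ⟨⌊(x - s) * c⌋₊, fun m (hm : s + m / c ≤ x) => Nat.le_floor <| by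
    rw [← le_sub_iff_add_le', div_le_iff₀ hc] at hm
    exact hm⟩

theorem le_gDigitU_iff (hq : 0 < q) (hs : s ≤ x) :
    k ≤ gDigitU q x s n ↔ s + k / q ^ (n + 1) ≤ x :=
  Nat.le_sSup_setOf_iff (fun _ _ hkm hm => le_trans (by gcongr) hm) (by simpa using hs)
    (bddAbove_setOf_add_div_le (pow_pos hq _))

theorem le_qgDigitU_iff (hq : 0 < q) (hs : s < x) :
    k ≤ qgDigitU q x s n ↔ s + k / q ^ (n + 1) < x :=
  Nat.le_sSup_setOf_iff (fun _ _ hkm hm => lt_of_le_of_lt (by gcongr) hm) (by simpa using hs)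
    ((bddAbove_setOf_add_div_le (pow_pos hq _)).mono fun _ hm => le_of_lt hm)

theorem gDigitU_self (hq : 0 < q) : gDigitU q x x n = 0 := by
  have h := (le_gDigitU_iff (k := gDigitU q x x n) hq le_rfl).mp le_rfl
  refine Nat.eq_zero_of_not_pos fun hd => ?_
  have := div_pos (Nat.cast_pos.mpr hd) (pow_pos hq (n + 1))
  linarith

theorem qgDigitU_eq_gDigitU (hq : 0 < q) (h : s + gDigitU q x s n / q ^ (n + 1) < x) :
    qgDigitU q x s n = gDigitU q x s n := by
  have hs : s < x := lt_of_le_of_lt (le_add_of_nonneg_right (by positivity)) h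
  refine eq_of_forall_le_iff fun k => ?_
  rw [le_qgDigitU_iff hq hs]
  exact ⟨fun hk => (le_gDigitU_iff hq hs.le).mpr hk.le, fun hk => lt_of_le_of_lt (by gcongr) h⟩

theorem qgDigitU_eq_gDigitU_sub_one (hq : 0 < q) (hb : 1 ≤ gDigitU q x s n)
    (h : s + gDigitU q x s n / q ^ (n + 1) = x) :
    qgDigitU q x s n = gDigitU q x s n - 1 := by
  have hs : s < x := by
    rw [← h, lt_add_iff_pos_right]
    exact div_pos (by exact_mod_cast hb) (pow_pos hq _)
  generalize gDigitU q x s n = b at hb h ⊢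
  refine eq_of_forall_le_iff fun k => ?_
  rw [le_qgDigitU_iff hq hs, ← h, add_lt_add_iff_left,
    div_lt_div_iff_of_pos_right (pow_pos hq _), Nat.cast_lt]
  omega

theorem qgDigitU_add_eq (hq : 0 < q) {N : ℕ} {y t : ℝ} (hs : s < x)
    (h : (x - s) * q ^ N = y - t) : qgDigitU q x s (N + n) = qgDigitU q y t n := by
  have ht : t < y := by rw [← sub_pos, ← h]; exact mul_pos (sub_pos.mpr hs) (pow_pos hq N)
  refine eq_of_forall_le_iff fun k => ?_
  have e : (k : ℝ) / q ^ (N + n + 1) = k / q ^ (n + 1) / q ^ N := by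
    rw [add_assoc, pow_add, div_div, mul_comm]
  rw [le_qgDigitU_iff hq hs, le_qgDigitU_iff hq ht, ← lt_sub_iff_add_lt', ← lt_sub_iff_add_lt',
    ← h, e, div_lt_iff₀ (pow_pos hq N)]

end Digits

section Sums

variable {q x : ℝ} {n : ℕ}

theorem gSumU_succ (q x : ℝ) (n : ℕ) :
    gSumU q x (n + 1) = gSumU q x n + greedyU q x n / q ^ (n + 1) := rfl

theorem qgSumU_succ (q x : ℝ) (n : ℕ) :
    qgSumU q x (n + 1) = qgSumU q x n + quasiGreedyU q x n / q ^ (n + 1) := rfl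

theorem gSumU_le (hq : 0 < q) (hx : 0 ≤ x) : ∀ n, gSumU q x n ≤ x
  | 0 => hx
  | n + 1 => (le_gDigitU_iff hq (gSumU_le hq hx n)).mp le_rfl

theorem qgSumU_lt (hq : 0 < q) (hx : 0 < x) : ∀ n, qgSumU q x n < x
  | 0 => hx
  | n + 1 => (le_qgDigitU_iff hq (qgSumU_lt hq hx n)).mp le_rfl

theorem gSumU_mono (hq : 0 < q) : Monotone (gSumU q x) :=
  monotone_nat_of_le_succ fun n => le_add_of_nonneg_right (by positivity)

theorem lt_gSumU_succ_add (hq : 0 < q) (hx : 0 ≤ x) (n : ℕ) :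
    x < gSumU q x (n + 1) + 1 / q ^ (n + 1) := by
  by_contra! h
  have : greedyU q x n + 1 ≤ greedyU q x n := (le_gDigitU_iff hq (gSumU_le hq hx n)).mpr <| by
    push_cast
    rwa [add_div, ← add_assoc]
  omega

theorem greedyU_eq_zero_of_gSumU_eq (hq : 0 < q) (h : gSumU q x n = x) : greedyU q x n = 0 := by
  rw [greedyU, h, gDigitU_self hq]

theorem gSumU_eq_of_le (hq : 0 < q) {N : ℕ} (h : gSumU q x N = x) :
    ∀ n, N ≤ n → gSumU q x n = x :=
  Nat.le_induction h fun n _ ih => by rw [gSumU_succ, greedyU_eq_zero_of_gSumU_eq hq ih, ih]; simp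

/-- The partial sums are eventually constant, and within `q⁻ⁿ` of `x` for every `n`. -/
theorem gSumU_eq_of_greedyU_eq_zero (hq : 1 < q) (hx : 0 ≤ x) {N : ℕ}
    (h0 : ∀ n, N ≤ n → greedyU q x n = 0) : gSumU q x N = x := by
  have hq0 : 0 < q := zero_lt_one.trans hq
  have hconst : ∀ n, N ≤ n → gSumU q x n = gSumU q x N :=
    Nat.le_induction rfl fun n hn ih => by rw [gSumU_succ, h0 n hn, ih]; simp
  have hlim :
      Tendsto (fun n : ℕ => gSumU q x N + 1 / q ^ (n + 1)) atTop (𝓝 (gSumU q x N)) := by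
    simpa using tendsto_const_nhds.add <| (tendsto_inv_atTop_zero.comp
      (tendsto_pow_atTop_atTop_of_one_lt hq)).comp (tendsto_add_atTop_nat 1)
  refine le_antisymm (gSumU_le hq0 hx N) (ge_of_tendsto hlim ?_)
  filter_upwards [eventually_ge_atTop N] with n hn
  rw [← hconst (n + 1) (by omega)]
  exact (lt_gSumU_succ_add hq0 hx n).le

theorem gSumU_lt_of_infinite (hq : 0 < q) (hx : 0 ≤ x)
    (hinf : {n | greedyU q x n ≠ 0}.Infinite) (n : ℕ) : gSumU q x n < x := by
  refine lt_of_le_of_ne (gSumU_le hq hx n) fun h => ?_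
  obtain ⟨b, hb, hnb⟩ := hinf.exists_gt n
  exact hb (greedyU_eq_zero_of_gSumU_eq hq (gSumU_eq_of_le hq h b hnb.le))

theorem qgSumU_eq_gSumU_of_lt (hq : 0 < q) :
    ∀ {n}, gSumU q x n < x → qgSumU q x n = gSumU q x n
  | 0, _ => rfl
  | n + 1, h => by
    have ih := qgSumU_eq_gSumU_of_lt hq (lt_of_le_of_lt (gSumU_mono hq n.le_succ) h)
    rw [qgSumU_succ, gSumU_succ, quasiGreedyU, ih, qgDigitU_eq_gDigitU hq h, greedyU]

theorem quasiGreedyU_eq_greedyU_of_lt (hq : 0 < q) (h : gSumU q x (n + 1) < x) :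
    quasiGreedyU q x n = greedyU q x n := by
  rw [quasiGreedyU, qgSumU_eq_gSumU_of_lt hq (lt_of_le_of_lt (gSumU_mono hq n.le_succ) h)]
  exact qgDigitU_eq_gDigitU hq h

theorem quasiGreedyU_add (hq : 0 < q) (hx : 0 < x) (N n : ℕ) :
    quasiGreedyU q x (N + n) = quasiGreedyU q ((x - qgSumU q x N) * q ^ N) n := by
  set y := (x - qgSumU q x N) * q ^ N
  have hrem : ∀ n, (x - qgSumU q x (N + n)) * q ^ N = y - qgSumU q y n := by
    intro n
    induction n with
    | zero => simp [y, qgSumU]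
    | succ n ih =>
      rw [← add_assoc, qgSumU_succ, qgSumU_succ, ← sub_sub, ← sub_sub, ← ih, quasiGreedyU,
        quasiGreedyU, qgDigitU_add_eq hq (qgSumU_lt hq hx _) ih, add_assoc N n 1, pow_add]
      field_simp
  exact qgDigitU_add_eq hq (qgSumU_lt hq hx _) (hrem n)

end Sums

/-- Proposition 3.7 (a): with unbounded digits, if the greedy expansion `(b_i)` of `x` has
a last nonzero element `b_m`, then the quasi-greedy expansion of `x` is
`b_1 … b_{m-1} (b_m - 1) α_1 α_2 …`, where `(α_i)` is the quasi-greedy expansion of `1`;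
otherwise the two expansions coincide. -/
theorem quasiGreedyU_eq_of_greedyU (q x : ℝ) (hq : 1 < q) (hx : 0 < x) :
    (∀ m : ℕ, 1 ≤ greedyU q x m → (∀ i, m < i → greedyU q x i = 0) →
      ((∀ i, i < m → quasiGreedyU q x i = greedyU q x i) ∧
        quasiGreedyU q x m = greedyU q x m - 1 ∧
        ∀ i, quasiGreedyU q x (m + 1 + i) = quasiGreedyU q 1 i)) ∧
    ({n | greedyU q x n ≠ 0}.Infinite → quasiGreedyU q x = greedyU q x) := by
  have hq0 : 0 < q := zero_lt_one.trans hq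
  refine ⟨fun m hbm h0 => ?_, fun hinf => funext fun n =>
    quasiGreedyU_eq_greedyU_of_lt hq0 (gSumU_lt_of_infinite hq0 hx.le hinf (n + 1))⟩
  have hsum : gSumU q x m + greedyU q x m / q ^ (m + 1) = x :=
    gSumU_eq_of_greedyU_eq_zero hq hx.le h0
  have hlt : gSumU q x m < x := by
    have := div_pos (by exact_mod_cast hbm : (0 : ℝ) < greedyU q x m) (pow_pos hq0 (m + 1))
    linarith
  have hqs := qgSumU_eq_gSumU_of_lt hq0 hlt
  have hqm : quasiGreedyU q x m = greedyU q x m - 1 := by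
    rw [quasiGreedyU, hqs]
    exact qgDigitU_eq_gDigitU_sub_one hq0 hbm hsum
  have hrem : (x - qgSumU q x (m + 1)) * q ^ (m + 1) = 1 := by
    rw [qgSumU_succ, hqs, hqm, Nat.cast_sub hbm, Nat.cast_one, sub_div, ← add_sub_assoc, hsum,
      sub_sub_cancel, one_div_mul_cancel (pow_pos hq0 _).ne']
  refine ⟨fun i hi => quasiGreedyU_eq_greedyU_of_lt hq0 ?_, hqm, fun i => ?_⟩
  · exact lt_of_le_of_lt (gSumU_mono hq0 hi) hlt
  · rw [quasiGreedyU_add hq0 hx, hrem]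
end
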